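/- Let (V, r, par) be a finite rooted tree in which every node has depth at most D (where depth v is the least n with par^[n] v = r), let ℓ : V → ℝ with ℓ r = 0 and ℓ v > 0 for all v ≠ r, and let L ≥ 1. Define par' : V → V by: par' r = r, and for u ≠ r, par' u is the strict ancestor w of u closest to u (i.e., of largest depth) satisfying ℓ w ≥ L · ℓ u, and par' u = r if no strict ancestor of u satisfies this. Then: (1) (V, r, par') is a finite rooted tree in which every node has depth at most D; (2) it is L-decreasing: for every u ≠ r with par' u ≠ r, ℓ (par' u) ≥ L · ℓ u; (3) for every set X ⊆ V with r ∈ X and par' u ∈ X for all u ∈ X, the set X' = X ∪ { w | ∃ u ∈ X, w is a strict ancestor of u and a strict descendant of par' u (with respect to par) } contains r, satisfies par u ∈ X' for all u ∈ X', and ℓ(X') ≤ D · L · ℓ(X). -/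

import Mathlib

open scoped Classical

/-- `u` is a descendant of `v` (equivalently, `v` is an ancestor of `u`). -/
def IsDesc {V : Type*} (par : V → V) (u v : V) : Prop := ∃ n : ℕ, par^[n] u = v

/-- `w` is a strict ancestor of `u`: an ancestor distinct from `u`. -/
def IsStrictAnc {V : Type*} (par : V → V) (w u : V) : Prop := IsDesc par u w ∧ w ≠ u

/-!
Since `par' u` is a strict `par`-ancestor of `u` (or the root), reattaching strictly decreases the
`par`-depth, so `par'` reaches the root within `D` steps. For the extension, each `x ∈ X` adds the
`par`-path from `x` up to, but excluding, `par' x`: at most `depth x ≤ D` nodes. Each intermediate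
node `w` has `ℓ w < L · ℓ x`, for otherwise `w` would be a strict ancestor of `x` with
`ℓ w ≥ L · ℓ x` lying strictly below `par' x`, contradicting the choice of `par' x` as the closest.
-/

open Finset Function

theorem Finset.sum_biUnion_le_sum_sum {ι α β : Type*} [DecidableEq α] [AddCommMonoid β]
    [PartialOrder β] [IsOrderedAddMonoid β] {f : α → β} (hf : ∀ a, 0 ≤ f a)
    (s : Finset ι) (t : ι → Finset α) :
    ∑ a ∈ s.biUnion t, f a ≤ ∑ i ∈ s, ∑ a ∈ t i, f a := by
  rw [← sup_eq_biUnion]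
  refine apply_sup_le_sum (f := fun u => ∑ a ∈ u, f a) sum_empty (fun {u v} => ?_) s
  rw [← sum_union_inter]
  exact le_add_of_nonneg_right (sum_nonneg fun a _ => hf a)

theorem exists_iterate_eq_of_measure_lt {V : Type*} {f : V → V} {r : V} (μ : V → ℕ)
    (hf : ∀ v, v ≠ r → μ (f v) < μ v) (v : V) : ∃ n ≤ μ v, f^[n] v = r := by
  induction h : μ v using Nat.strong_induction_on generalizing v with
  | _ m ih =>
    by_cases hv : v = r
    · exact ⟨0, Nat.zero_le _, hv⟩
    · obtain ⟨n, hn, hfn⟩ := ih (μ (f v)) (h ▸ hf v hv) (f v) rfl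
      exact ⟨n + 1, by have := hf v hv; omega, hfn⟩

section RootedTree

variable {V : Type*} {par : V → V} {r u v w x : V}

theorem IsDesc.refl (par : V → V) (u : V) : IsDesc par u u := ⟨0, rfl⟩

theorem isDesc_par (par : V → V) (u : V) : IsDesc par u (par u) := ⟨1, rfl⟩

theorem IsDesc.trans (huv : IsDesc par u v) (hvw : IsDesc par v w) : IsDesc par u w := by
  obtain ⟨m, rfl⟩ := huv
  obtain ⟨n, rfl⟩ := hvw
  exact ⟨n + m, iterate_add_apply par n m u⟩

theorem IsDesc.par_of_ne (h : IsDesc par u v) (hne : u ≠ v) : IsDesc par (par u) v := by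
  obtain ⟨_ | n, rfl⟩ := h
  · exact absurd rfl hne
  · exact ⟨n, rfl⟩

theorem IsStrictAnc.ne_root (hroot : par r = r) (h : IsStrictAnc par w u) : u ≠ r := by
  rintro rfl
  obtain ⟨⟨n, hn⟩, hne⟩ := h
  exact hne (iterate_fixed hroot n ▸ hn).symm

theorem isStrictAnc_par (hreach : ∀ v, ∃ n, par^[n] v = r) (hu : u ≠ r) :
    IsStrictAnc par (par u) u := by
  refine ⟨isDesc_par par u, fun hfix => hu ?_⟩
  obtain ⟨n, hn⟩ := hreach u
  rwa [iterate_fixed hfix] at hn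

noncomputable def depth (hreach : ∀ v, ∃ n, par^[n] v = r) (v : V) : ℕ := Nat.find (hreach v)

theorem iterate_depth (hreach : ∀ v, ∃ n, par^[n] v = r) (v : V) : par^[depth hreach v] v = r :=
  Nat.find_spec (hreach v)

theorem depth_le_of_iterate_eq (hreach : ∀ v, ∃ n, par^[n] v = r) {n : ℕ} (h : par^[n] v = r) :
    depth hreach v ≤ n :=
  Nat.find_min' _ h

theorem depth_eq_zero_iff (hreach : ∀ v, ∃ n, par^[n] v = r) : depth hreach v = 0 ↔ v = r := by
  simp [depth]

theorem iterate_eq_root_of_depth_le (hroot : par r = r) (hreach : ∀ v, ∃ n, par^[n] v = r)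
    {k : ℕ} (h : depth hreach v ≤ k) : par^[k] v = r := by
  rw [← Nat.sub_add_cancel h, iterate_add_apply, iterate_depth, iterate_fixed hroot]

theorem depth_iterate_le (hroot : par r = r) (hreach : ∀ v, ∃ n, par^[n] v = r) (v : V) (k : ℕ) :
    depth hreach (par^[k] v) ≤ depth hreach v - k := by
  by_cases hk : k ≤ depth hreach v
  · apply depth_le_of_iterate_eq
    rw [← iterate_add_apply, Nat.sub_add_cancel hk, iterate_depth]
  · rw [iterate_eq_root_of_depth_le hroot hreach (Nat.le_of_not_le hk),
      (depth_eq_zero_iff hreach).2 rfl]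
    exact Nat.zero_le _

theorem IsStrictAnc.depth_lt (hroot : par r = r) (hreach : ∀ v, ∃ n, par^[n] v = r)
    (h : IsStrictAnc par w u) : depth hreach w < depth hreach u := by
  have hu : depth hreach u ≠ 0 := (depth_eq_zero_iff hreach).not.2 (h.ne_root hroot)
  obtain ⟨⟨k, rfl⟩, hne⟩ := h
  have hk : k ≠ 0 := by rintro rfl; exact hne rfl
  have := depth_iterate_le hroot hreach u k
  omega

theorem card_le_depth (hroot : par r = r) (hreach : ∀ v, ∃ n, par^[n] v = r) {s : Finset V}
    (hs : ∀ w ∈ s, IsDesc par x w ∧ w ≠ r) : #s ≤ depth hreach x :=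
  calc #s ≤ #((range (depth hreach x)).image (par^[·] x)) := card_le_card fun w hw => by
        obtain ⟨⟨k, rfl⟩, hne⟩ := hs w hw
        refine mem_image.2 ⟨k, mem_range.2 (not_le.1 fun hk => hne ?_), rfl⟩
        exact iterate_eq_root_of_depth_le hroot hreach hk
    _ ≤ #(range (depth hreach x)) := card_image_le
    _ = depth hreach x := card_range _

theorem sum_le_depth_mul {β : Type*} [Semiring β] [PartialOrder β] [IsOrderedRing β]
    (hroot : par r = r) (hreach : ∀ v, ∃ n, par^[n] v = r) {s : Finset V}
    (hs : ∀ w ∈ s, IsDesc par x w ∧ w ≠ r) {ℓ : V → β} {c : β} (hc : 0 ≤ c)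
    (hℓ : ∀ w ∈ s, ℓ w ≤ c) : ∑ w ∈ s, ℓ w ≤ depth hreach x * c :=
  calc ∑ w ∈ s, ℓ w ≤ #s • c := sum_le_card_nsmul _ _ _ hℓ
    _ = #s * c := nsmul_eq_mul _ _
    _ ≤ depth hreach x * c := by gcongr; exact card_le_depth hroot hreach hs

theorem IsDesc.antisymm (hroot : par r = r) (hreach : ∀ v, ∃ n, par^[n] v = r)
    (huw : IsDesc par u w) (hwu : IsDesc par w u) : u = w := by
  by_contra hne
  have h₁ := IsStrictAnc.depth_lt hroot hreach ⟨huw, Ne.symm hne⟩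
  have h₂ := IsStrictAnc.depth_lt hroot hreach ⟨hwu, hne⟩
  omega

theorem IsStrictAnc.of_isDesc (hroot : par r = r) (hreach : ∀ v, ∃ n, par^[n] v = r)
    (h : IsStrictAnc par w u) (hxu : IsDesc par x u) : IsStrictAnc par w x :=
  ⟨hxu.trans h.1, by rintro rfl; exact h.2 (h.1.antisymm hroot hreach hxu).symm⟩

end RootedTree

section Reattach

variable {V : Type*} [Fintype V] [DecidableEq V] {par par' : V → V} {r u x : V} {X : Finset V}

noncomputable def openPath (par : V → V) (x y : V) : Finset V :=
  {w | IsStrictAnc par w x ∧ IsDesc par w y ∧ w ≠ y}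

noncomputable def fillPaths (par par' : V → V) (X : Finset V) : Finset V :=
  X.biUnion fun x => insert x (openPath par x (par' x))

@[simp]
theorem mem_openPath {w y : V} :
    w ∈ openPath par x y ↔ IsStrictAnc par w x ∧ IsDesc par w y ∧ w ≠ y := by
  simp [openPath]

theorem openPath_root_left (hroot : par r = r) (y : V) : openPath par r y = ∅ :=
  filter_eq_empty_iff.2 fun _ _ h => h.1.ne_root hroot rfl

theorem subset_fillPaths : X ⊆ fillPaths par par' X :=
  fun x hx => mem_biUnion.2 ⟨x, hx, mem_insert_self _ _⟩

theorem par_mem_fillPaths_of_isDesc (hroot : par r = r)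
    (hreach : ∀ v, ∃ n, par^[n] v = r) (hX : ∀ u ∈ X, par' u ∈ X) (hx : x ∈ X)
    (hxu : IsDesc par x u) (hu : IsStrictAnc par (par' x) u) : par u ∈ fillPaths par par' X := by
  by_cases h : par u = par' x
  · exact subset_fillPaths (h ▸ hX x hx)
  · refine mem_biUnion.2 ⟨x, hx, mem_insert_of_mem (mem_openPath.2 ⟨?_, ?_, h⟩)⟩
    · exact (isStrictAnc_par hreach (hu.ne_root hroot)).of_isDesc hroot hreach hxu
    · exact hu.1.par_of_ne hu.2.symm

theorem par_mem_fillPaths (hroot : par r = r)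
    (hreach : ∀ v, ∃ n, par^[n] v = r) (hanc : ∀ u, u ≠ r → IsStrictAnc par (par' u) u)
    (hrX : r ∈ X) (hX : ∀ u ∈ X, par' u ∈ X) (hu : u ∈ fillPaths par par' X) :
    par u ∈ fillPaths par par' X := by
  obtain ⟨x, hx, hux⟩ := mem_biUnion.1 hu
  rcases mem_insert.1 hux with rfl | hux
  · by_cases hur : u = r
    · exact subset_fillPaths (hur ▸ hroot.symm ▸ hrX)
    · exact par_mem_fillPaths_of_isDesc hroot hreach hX hx (IsDesc.refl par u) (hanc u hur)
  · obtain ⟨hux, hup, hne⟩ := mem_openPath.1 hux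
    exact par_mem_fillPaths_of_isDesc hroot hreach hX hx hux.1 ⟨hup, hne.symm⟩

theorem sum_fillPaths_le (hroot : par r = r) (hreach : ∀ v, ∃ n, par^[n] v = r)
    {D : ℕ} (hD : ∀ v, depth hreach v ≤ D) {ℓ : V → ℝ} (hℓr : ℓ r = 0) (hℓ : ∀ v, 0 ≤ ℓ v)
    {L : ℝ} (hL : 1 ≤ L) (hlight : ∀ x, x ≠ r → ∀ w ∈ openPath par x (par' x), ℓ w ≤ L * ℓ x)
    (X : Finset V) : ∑ w ∈ fillPaths par par' X, ℓ w ≤ D * L * ∑ x ∈ X, ℓ x := by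
  rw [mul_sum]
  refine (sum_biUnion_le_sum_sum hℓ _ _).trans (sum_le_sum fun x _ => ?_)
  by_cases hx : x = r
  · simp [hx, openPath_root_left hroot, hℓr]
  have hpath : ∀ w ∈ insert x (openPath par x (par' x)), IsDesc par x w ∧ w ≠ r := by
    intro w hw
    rcases mem_insert.1 hw with rfl | hw
    · exact ⟨IsDesc.refl par w, hx⟩
    · obtain ⟨hwx, hwp, hne⟩ := mem_openPath.1 hw
      exact ⟨hwx.1, IsStrictAnc.ne_root (w := par' x) hroot ⟨hwp, hne.symm⟩⟩
  have hLx : 0 ≤ L * ℓ x := mul_nonneg (zero_le_one.trans hL) (hℓ x)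
  calc ∑ w ∈ insert x (openPath par x (par' x)), ℓ w ≤ depth hreach x * (L * ℓ x) := by
        refine sum_le_depth_mul hroot hreach hpath hLx fun w hw => ?_
        rcases mem_insert.1 hw with rfl | hw
        · exact le_mul_of_one_le_left (hℓ w) hL
        · exact hlight x hx w hw
    _ ≤ D * L * ℓ x := by
        rw [mul_assoc]
        exact mul_le_mul_of_nonneg_right (Nat.cast_le.2 (hD x)) hLx

end Reattach

theorem stmt16_general {V : Type*} [Fintype V] [DecidableEq V]
    (r : V) (par : V → V) (D : ℕ)
    (hroot : par r = r) (hdepth : ∀ v, ∃ n ≤ D, par^[n] v = r)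
    (ℓ : V → ℝ) (hℓr : ℓ r = 0) (hℓ : ∀ v, v ≠ r → 0 < ℓ v)
    (L : ℝ) (hL : 1 ≤ L)
    (par' : V → V)
    (hpar' : ∀ u, u ≠ r →
      ((IsStrictAnc par (par' u) u ∧ L * ℓ u ≤ ℓ (par' u) ∧
          ∀ w, IsStrictAnc par w u → L * ℓ u ≤ ℓ w → IsDesc par (par' u) w) ∨
        ((∀ w, IsStrictAnc par w u → ¬ L * ℓ u ≤ ℓ w) ∧ par' u = r))) :
    (∀ v, ∃ n ≤ D, par'^[n] v = r) ∧
    (∀ u, u ≠ r → par' u ≠ r → L * ℓ u ≤ ℓ (par' u)) ∧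
    (∀ X : Finset V, r ∈ X → (∀ u ∈ X, par' u ∈ X) →
      let X' : Finset V := X ∪ Finset.univ.filter (fun w => ∃ u ∈ X,
        IsStrictAnc par w u ∧ IsDesc par w (par' u) ∧ w ≠ par' u)
      r ∈ X' ∧ (∀ u ∈ X', par u ∈ X') ∧
        ∑ u ∈ X', ℓ u ≤ (D : ℝ) * L * ∑ u ∈ X, ℓ u) := by
  have hreach : ∀ v, ∃ n, par^[n] v = r := fun v => (hdepth v).imp fun _ h => h.2
  have hD : ∀ v, depth hreach v ≤ D := fun v =>
    let ⟨_, hn, h⟩ := hdepth v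
    (depth_le_of_iterate_eq hreach h).trans hn
  have hanc : ∀ u, u ≠ r → IsStrictAnc par (par' u) u := fun u hu => by
    rcases hpar' u hu with ⟨h, -, -⟩ | ⟨-, h⟩
    · exact h
    · exact h ▸ ⟨hreach u, hu.symm⟩
  have hlight : ∀ x, x ≠ r → ∀ w ∈ openPath par x (par' x), ℓ w ≤ L * ℓ x := by
    intro x hx w hw
    obtain ⟨hwx, hwp, hne⟩ := mem_openPath.1 hw
    rcases hpar' x hx with ⟨-, -, hclosest⟩ | ⟨hnone, -⟩
    · by_contra! h
      exact hne (hwp.antisymm hroot hreach (hclosest w hwx h.le))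
    · exact (not_le.1 (hnone w hwx)).le
  have hℓ₀ : ∀ v, 0 ≤ ℓ v := fun v =>
    (eq_or_ne v r).elim (fun h => h ▸ hℓr.ge) fun h => (hℓ v h).le
  refine ⟨fun v => ?_, fun u hu hpu => ?_, fun X hrX hX => ?_⟩
  · obtain ⟨n, hn, h⟩ := exists_iterate_eq_of_measure_lt (depth hreach)
      (fun u hu => (hanc u hu).depth_lt hroot hreach) v
    exact ⟨n, hn.trans (hD v), h⟩
  · exact ((hpar' u hu).resolve_right fun h => hpu h.2).2.1
  · intro X'
    have hX' : X' = fillPaths par par' X := by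
      ext w
      simp only [X', fillPaths, mem_union, mem_filter, mem_univ, true_and, mem_biUnion, mem_insert,
        mem_openPath]
      grind
    rw [hX']
    exact ⟨subset_fillPaths hrX, fun u hu => par_mem_fillPaths hroot hreach hanc hrX hX hu,
      sum_fillPaths_le hroot hreach hD hℓr hℓ₀ hL hlight X⟩

/-- The reduction to `L`-decreasing trees underlying Theorem 3.1. `par'` reconnects
each non-root node `u` to its closest strict ancestor `w` with `ℓ w ≥ L · ℓ u`
("closest" meaning every qualifying strict ancestor of `u` is an ancestor of `par' u`),
or to the root if no such ancestor exists. Then: (1) `(V, r, par')` is a finite rooted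
tree of depth at most `D`; (2) it is `L`-decreasing; (3) every service subtree `X` of
`(V, r, par')` extends, by adding the original intermediate nodes, to a service subtree
`X'` of `(V, r, par)` of weight at most `D · L · ℓ(X)`. -/
theorem stmt16 {V : Type*} [Fintype V] [DecidableEq V]
    (r : V) (par : V → V) (D : ℕ)
    (hroot : par r = r) (hdepth : ∀ v, ∃ n ≤ D, par^[n] v = r)
    (ℓ : V → ℝ) (hℓr : ℓ r = 0) (hℓ : ∀ v, v ≠ r → 0 < ℓ v)
    (L : ℝ) (hL : 1 ≤ L)
    (par' : V → V) (hpr : par' r = r)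
    (hpar' : ∀ u, u ≠ r →
      ((IsStrictAnc par (par' u) u ∧ L * ℓ u ≤ ℓ (par' u) ∧
          ∀ w, IsStrictAnc par w u → L * ℓ u ≤ ℓ w → IsDesc par (par' u) w) ∨
        ((∀ w, IsStrictAnc par w u → ¬ L * ℓ u ≤ ℓ w) ∧ par' u = r))) :
    (∀ v, ∃ n ≤ D, par'^[n] v = r) ∧
    (∀ u, u ≠ r → par' u ≠ r → L * ℓ u ≤ ℓ (par' u)) ∧
    (∀ X : Finset V, r ∈ X → (∀ u ∈ X, par' u ∈ X) →
      let X' : Finset V := X ∪ Finset.univ.filter (fun w => ∃ u ∈ X,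
        IsStrictAnc par w u ∧ IsDesc par w (par' u) ∧ w ≠ par' u)
      r ∈ X' ∧ (∀ u ∈ X', par u ∈ X') ∧
        ∑ u ∈ X', ℓ u ≤ (D : ℝ) * L * ∑ u ∈ X, ℓ u) :=
  stmt16_general r par D hroot hdepth ℓ hℓr hℓ L hL par' hpar'
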